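/- Let φ ∈ H^∞ with ‖φ‖_∞ ≤ 1 and let u be the inner factor of φ (so φ = uG with u inner and G outer). For any inner function I, every unit vector belonging to I·K_u is T_φ-inner. -/

import Mathlib

open MeasureTheory Complex Filter Metric

/-- Normalized Lebesgue (arclength) measure on the unit circle `𝕋 ⊆ ℂ`. -/
noncomputable def mCirc : Measure ℂ :=
  Measure.map (fun θ : ℝ => Complex.exp (θ * Complex.I))
    ((ENNReal.ofReal (2 * Real.pi))⁻¹ • volume.restrict (Set.Ioc 0 (2 * Real.pi)))

/-- `f` is (the boundary function of) a function in the Hardy space `H²`: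
it is square integrable on `𝕋` and its negative Fourier coefficients vanish. -/
def MemH2 (f : ℂ → ℂ) : Prop :=
  MemLp f 2 mCirc ∧ ∀ n : ℕ, 1 ≤ n → ∫ z, f z * z ^ n ∂mCirc = 0

/-- `u` is (the boundary function of) an inner function: it is unimodular a.e. on `𝕋`
and its negative Fourier coefficients vanish. -/
def InnerBdry (u : ℂ → ℂ) : Prop :=
  (∀ᵐ z ∂mCirc, ‖u z‖ = 1) ∧ ∀ n : ℕ, 1 ≤ n → ∫ z, u z * z ^ n ∂mCirc = 0

/-- `φ` is (the boundary function of) a function in `H^∞`. -/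
def HinfBdry (φ : ℂ → ℂ) : Prop :=
  MemLp φ ⊤ mCirc ∧ ∀ n : ℕ, 1 ≤ n → ∫ z, φ z * z ^ n ∂mCirc = 0

/-- `f` is a `T_φ`-inner vector: a unit vector with `⟨φ^n f, f⟩ = 0` for all `n ≥ 1`. -/
def TInner (φ f : ℂ → ℂ) : Prop :=
  (∫ z, ‖f z‖ ^ 2 ∂mCirc) = 1 ∧
  ∀ n : ℕ, 1 ≤ n → ∫ z, (φ z) ^ n * (f z * (starRingEnd ℂ) (f z)) ∂mCirc = 0

/-- `f` belongs to the model space `K_u = H² ⊖ u H²`. -/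
def InKu (u f : ℂ → ℂ) : Prop :=
  MemH2 f ∧ ∀ n : ℕ, ∫ z, f z * (starRingEnd ℂ) (u z * z ^ n) ∂mCirc = 0

/-- `G` is (the boundary function of) an outer function in `H²`: polynomial multiples
of `G` are dense in `H²` (`G` is a cyclic vector for the shift). -/
def OuterBdry (G : ℂ → ℂ) : Prop :=
  MemH2 G ∧ ∀ h : ℂ → ℂ, MemH2 h → ∀ ε : ℝ, 0 < ε →
    ∃ (N : ℕ) (c : ℕ → ℂ),
      eLpNorm (fun z => h z - (∑ k ∈ Finset.range N, c k * z ^ k) * G z) 2 mCirc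
        < ENNReal.ofReal ε


/-!
Since `|I| = 1` on the circle, `⟨φⁿ f, f⟩ = ⟨φⁿ g, g⟩`. For `n ≥ 1` write
`φⁿ g = u · (G φⁿ⁻¹ g)`: the factor `G φⁿ⁻¹ g` has modulus `|φⁿ g|`, so it is in `L²`, and it is
a product of two `H²` functions, so its negative Fourier coefficients vanish. Hence `φⁿ g ∈ u H²`,
which is orthogonal to `g ∈ K_u`.
-/

open scoped ComplexConjugate InnerProductSpace

namespace AddCircle

variable {T : ℝ} [Fact (0 < T)]

theorem hasSum_fourierCoeff_neg_mul_fourierCoeff {F V : AddCircle T → ℂ}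
    (hF : MemLp F 2 haarAddCircle) (hV : MemLp V 2 haarAddCircle) :
    HasSum (fun i : ℤ => fourierCoeff F (-i) * fourierCoeff V i)
      (∫ t, F t * V t ∂haarAddCircle) := by
  have hF' : MemLp (fun t => conj (F t)) 2 haarAddCircle :=
    hF.of_le (continuous_conj.comp_aestronglyMeasurable hF.1) (.of_forall fun _ => by simp)
  have hterm : ∀ i : ℤ, ⟪hF'.toLp _, fourierBasis i⟫_ℂ * ⟪fourierBasis i, hV.toLp _⟫_ℂ
      = fourierCoeff F (-i) * fourierCoeff V i := by
    intro i
    rw [← inner_conj_symm, ← fourierBasis.repr_apply_apply, ← fourierBasis.repr_apply_apply,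
      fourierBasis_repr, fourierBasis_repr, fourierCoeff_congr_ae hF'.coeFn_toLp,
      fourierCoeff_congr_ae hV.coeFn_toLp]
    simp only [fourierCoeff, ← integral_conj]
    congr 2
    ext t
    simp
  have hinner : ⟪hF'.toLp _, hV.toLp _⟫_ℂ = ∫ t, F t * V t ∂haarAddCircle := by
    rw [MeasureTheory.L2.inner_def]
    refine integral_congr_ae ?_
    filter_upwards [hF'.coeFn_toLp, hV.coeFn_toLp] with t hFt hVt
    simp [hFt, hVt, mul_comm]
  have key := fourierBasis.hasSum_inner_mul_inner (hF'.toLp _) (hV.toLp _)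
  rwa [funext hterm, hinner] at key

end AddCircle

instance : Fact (0 < 2 * Real.pi) := ⟨Real.two_pi_pos⟩

noncomputable def circleExp (x : AddCircle (2 * Real.pi)) : ℂ := AddCircle.toCircle x

theorem circleExp_coe (θ : ℝ) : circleExp θ = Complex.exp (θ * Complex.I) := by
  simp [circleExp, AddCircle.toCircle_apply_mk, Circle.coe_exp]

theorem continuous_circleExp : Continuous circleExp :=
  continuous_subtype_val.comp AddCircle.continuous_toCircle

theorem measurableEmbedding_circleExp : MeasurableEmbedding circleExp :=
  (continuous_circleExp.isClosedEmbedding (Subtype.val_injective.comp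
    (AddCircle.injective_toCircle Real.two_pi_pos.ne'))).measurableEmbedding

theorem fourier_natCast_eq_circleExp_pow (j : ℕ) (x : AddCircle (2 * Real.pi)) :
    fourier (j : ℤ) x = circleExp x ^ j := by
  simp [fourier_apply, AddCircle.toCircle_nsmul, circleExp]

theorem measurePreserving_circleExp :
    MeasurePreserving circleExp AddCircle.haarAddCircle mCirc := by
  refine ⟨continuous_circleExp.measurable, ?_⟩
  have hexp : (fun θ : ℝ => Complex.exp (θ * Complex.I)) = circleExp ∘ (↑) :=
    funext fun θ => (circleExp_coe θ).symm
  have hmk := (AddCircle.measurePreserving_mk (2 * Real.pi) 0).map_eq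
  rw [zero_add] at hmk
  rw [mCirc, hexp, ← Measure.map_map continuous_circleExp.measurable AddCircle.measurable_mk',
    Measure.map_smul, hmk, AddCircle.volume_eq_smul_haarAddCircle, smul_smul,
    ENNReal.inv_mul_cancel (ENNReal.ofReal_pos.mpr Real.two_pi_pos).ne' ENNReal.ofReal_ne_top,
    one_smul]

instance : IsProbabilityMeasure mCirc :=
  measurePreserving_circleExp.map_eq ▸
    Measure.isProbabilityMeasure_map continuous_circleExp.aemeasurable

theorem ae_norm_eq_one_mCirc : ∀ᵐ z ∂mCirc, ‖z‖ = 1 := by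
  rw [← measurePreserving_circleExp.map_eq,
    measurableEmbedding_circleExp.ae_map_iff]
  exact .of_forall fun x => Circle.norm_coe _

theorem fourierCoeff_comp_circleExp_neg (F : ℂ → ℂ) (j : ℕ) :
    fourierCoeff (F ∘ circleExp) (-j) = ∫ z, F z * z ^ j ∂mCirc := by
  simp only [fourierCoeff, neg_neg, fourier_natCast_eq_circleExp_pow, smul_eq_mul,
    Function.comp_apply, mul_comm (circleExp _ ^ j)]
  exact measurePreserving_circleExp.integral_comp measurableEmbedding_circleExp
    fun z => F z * z ^ j

-- Parseval: `∫ c v = ∑ ĉ(-i) v̂(i)`, where `ĉ(-i) = 0` for `i ≥ 0` and `v̂(i) = 0` for `i < 0`.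
theorem integral_mul_eq_zero_of_memH2 {c v : ℂ → ℂ} (hc : MemLp c 2 mCirc)
    (hc0 : ∀ j : ℕ, ∫ z, c z * z ^ j ∂mCirc = 0) (hv : MemH2 v) :
    ∫ z, c z * v z ∂mCirc = 0 := by
  have hsum := AddCircle.hasSum_fourierCoeff_neg_mul_fourierCoeff
    (hc.comp_measurePreserving measurePreserving_circleExp)
    (hv.1.comp_measurePreserving measurePreserving_circleExp)
  have hterm : ∀ i : ℤ,
      fourierCoeff (c ∘ circleExp) (-i) * fourierCoeff (v ∘ circleExp) i = 0 := by
    intro i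
    rcases le_or_gt 0 i with hi | hi
    · lift i to ℕ using hi
      rw [fourierCoeff_comp_circleExp_neg, hc0, zero_mul]
    · obtain ⟨m, rfl⟩ : ∃ m : ℕ, i = -m := ⟨i.natAbs, by omega⟩
      rw [fourierCoeff_comp_circleExp_neg, hv.2 m (by omega), mul_zero]
  rw [← measurePreserving_circleExp.integral_comp measurableEmbedding_circleExp]
  exact hsum.unique (by simpa only [hterm] using hasSum_zero)

theorem HinfBdry.memH2 {φ : ℂ → ℂ} (hφ : HinfBdry φ) : MemH2 φ :=
  ⟨hφ.1.mono_exponent le_top, hφ.2⟩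

theorem MemH2.mul {h v : ℂ → ℂ} (hh : MemH2 h) (hv : MemH2 v)
    (hhv : MemLp (fun z => h z * v z) 2 mCirc) : MemH2 (fun z => h z * v z) := by
  refine ⟨hhv, fun m hm => ?_⟩
  have hhm : MemLp (fun z => h z * z ^ m) 2 mCirc := by
    refine hh.1.of_le (hh.1.1.mul (continuous_pow m).aestronglyMeasurable) ?_
    filter_upwards [ae_norm_eq_one_mCirc] with z hz
    simp [hz]
  have hhm0 : ∀ j : ℕ, ∫ z, h z * z ^ m * z ^ j ∂mCirc = 0 := fun j => by
    simpa only [mul_assoc, ← pow_add] using hh.2 (m + j) (by omega)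
  calc ∫ z, h z * v z * z ^ m ∂mCirc = ∫ z, h z * z ^ m * v z ∂mCirc := by
        simp only [mul_right_comm]
    _ = 0 := integral_mul_eq_zero_of_memH2 hhm hhm0 hv

theorem MemH2.pow_mul {φ g : ℂ → ℂ} (hg : MemH2 g) (hφ : HinfBdry φ) (k : ℕ) :
    MemH2 (fun z => φ z ^ k * g z) := by
  induction k with
  | zero => simpa using hg
  | succ k ih =>
    simpa only [pow_succ', mul_assoc] using hφ.memH2.mul ih (ih.1.mul' hφ.1)

theorem InKu.integral_mul_conj_eq_zero {u g h : ℂ → ℂ} (hg : InKu u g)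
    (hum : AEStronglyMeasurable u mCirc) (hu : ∀ᵐ z ∂mCirc, ‖u z‖ = 1) (hh : MemH2 h) :
    ∫ z, u z * h z * conj (g z) ∂mCirc = 0 := by
  have hc : MemLp (fun z => u z * conj (g z)) 2 mCirc := by
    refine hg.1.1.congr_norm (hum.mul (continuous_conj.comp_aestronglyMeasurable hg.1.1.1)) ?_
    filter_upwards [hu] with z hz
    simp [hz]
  have hc0 : ∀ j : ℕ, ∫ z, u z * conj (g z) * z ^ j ∂mCirc = 0 := fun j => by
    have h := congrArg conj (hg.2 j)
    rw [← integral_conj, map_zero] at h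
    rw [← h]
    congr 1
    ext z
    simp only [map_mul, map_pow, Complex.conj_conj]
    ring
  calc ∫ z, u z * h z * conj (g z) ∂mCirc = ∫ z, u z * conj (g z) * h z ∂mCirc := by
        simp only [mul_right_comm]
    _ = 0 := integral_mul_eq_zero_of_memH2 hc hc0 hh

theorem memH2_one : MemH2 fun _ => 1 := by
  refine ⟨memLp_const 1, fun n hn => ?_⟩
  have hone : (fun _ : ℂ => (1 : ℂ)) ∘ circleExp = fourier 0 := by
    ext x
    simp
  rw [← fourierCoeff_comp_circleExp_neg, hone, fourierCoeff_fourier, Pi.single_apply,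
    if_neg (by omega)]

open scoped ENNReal NNReal in
theorem OuterBdry.ae_ne_zero {G : ℂ → ℂ} (hG : OuterBdry G) : ∀ᵐ z ∂mCirc, G z ≠ 0 := by
  set S := {z | G z = 0}
  have hS : NullMeasurableSet S mCirc :=
    hG.1.1.1.aemeasurable.nullMeasurable (measurableSet_singleton 0)
  have hsmall : ∀ ε : ℝ≥0, 0 < ε → mCirc S ^ (1 / 2 : ℝ) ≤ ε := by
    intro ε hε
    obtain ⟨N, c, hlt⟩ := hG.2 (fun _ => 1) memH2_one ε hε
    -- on `S` every polynomial multiple of `G` stays at distance `1` from the constant `1`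
    calc mCirc S ^ (1 / 2 : ℝ) = eLpNorm (S.indicator fun _ => (1 : ℂ)) 2 mCirc := by
          rw [eLpNorm_indicator_const₀ hS two_ne_zero ENNReal.ofNat_ne_top]
          simp
      _ ≤ eLpNorm (fun z => 1 - (∑ k ∈ Finset.range N, c k * z ^ k) * G z) 2 mCirc := by
          refine eLpNorm_mono fun z => ?_
          by_cases hz : z ∈ S
          · simp [hz, show G z = 0 from hz]
          · simp [hz]
      _ ≤ ε := by simpa using hlt.le
  have hS0 : mCirc S = 0 := by
    have := ENNReal.le_of_forall_pos_le_add (a := mCirc S ^ (1 / 2 : ℝ)) (b := 0)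
      fun ε hε _ => by simpa using hsmall ε hε
    simpa using this
  simpa [ae_iff, S] using hS0

theorem aestronglyMeasurable_of_ae_eq_mul {α : Type*} [MeasurableSpace α] {μ : Measure α}
    {φ u G : α → ℂ} (hφ : AEStronglyMeasurable φ μ) (hG : AEStronglyMeasurable G μ)
    (hG0 : ∀ᵐ z ∂μ, G z ≠ 0) (hfact : ∀ᵐ z ∂μ, φ z = u z * G z) :
    AEStronglyMeasurable u μ :=
  (hφ.aemeasurable.div hG.aemeasurable).aestronglyMeasurable.congr <| by
    filter_upwards [hfact, hG0] with z h1 h2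
    simp [h1, h2]

theorem statement3_general (φ u G I f g : ℂ → ℂ)
    (hφ : HinfBdry φ)
    (hu : InnerBdry u) (hG : OuterBdry G)
    (hfact : ∀ᵐ z ∂mCirc, φ z = u z * G z)
    (hI : InnerBdry I)
    (hg : InKu u g)
    (hfg : ∀ᵐ z ∂mCirc, f z = I z * g z)
    (hunit : ∫ z, ‖f z‖ ^ 2 ∂mCirc = 1) :
    TInner φ f := by
  refine ⟨hunit, fun n hn => ?_⟩
  obtain ⟨k, rfl⟩ : ∃ k, n = k + 1 := ⟨n - 1, by omega⟩
  -- `u` itself is not assumed measurable; it agrees a.e. with `φ / G`.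
  have hum : AEStronglyMeasurable u mCirc :=
    aestronglyMeasurable_of_ae_eq_mul hφ.1.1 hG.1.1.1 hG.ae_ne_zero hfact
  have hφg := hg.1.pow_mul hφ
  have hGφg : MemH2 fun z => G z * (φ z ^ k * g z) := by
    refine hG.1.mul (hφg k) ((hφg (k + 1)).1.congr_norm (hG.1.1.1.mul (hφg k).1.1) ?_)
    filter_upwards [hfact, hu.1] with z h1 h2
    simp [pow_succ', h1, h2, mul_assoc]
  calc ∫ z, φ z ^ (k + 1) * (f z * conj (f z)) ∂mCirc
      = ∫ z, u z * (G z * (φ z ^ k * g z)) * conj (g z) ∂mCirc := by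
        refine integral_congr_ae ?_
        filter_upwards [hfact, hfg, hI.1] with z h1 h2 h3
        have hff : f z * conj (f z) = g z * conj (g z) := by
          rw [h2, Complex.mul_conj', Complex.mul_conj', norm_mul, h3, one_mul]
        rw [hff, pow_succ', h1]
        ring
    _ = 0 := hg.integral_mul_conj_eq_zero hum hu.1 hGφg

/-- if `φ = u G` with `u` inner and `G` outer, then for any inner `I`,
every unit vector `f ∈ I·K_u` is `T_φ`-inner. -/
theorem statement3 (φ u G I f g : ℂ → ℂ)
    (hφ : HinfBdry φ) (hφ1 : eLpNorm φ ⊤ mCirc ≤ 1)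
    (hu : InnerBdry u) (hG : OuterBdry G)
    (hfact : ∀ᵐ z ∂mCirc, φ z = u z * G z)
    (hI : InnerBdry I)
    (hg : InKu u g)
    (hfg : ∀ᵐ z ∂mCirc, f z = I z * g z)
    (hunit : ∫ z, ‖f z‖ ^ 2 ∂mCirc = 1) :
    TInner φ f :=
  statement3_general φ u G I f g hφ hu hG hfact hI hg hfg hunit
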